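/- Let A be an m×n complex k-Hadamard matrix and v ∈ ℂⁿ nonzero. Then for any q ∈ [1,∞], ‖v‖₁ · ‖Av‖₁ ≥ k^{1−1/q} · ‖v‖_q · ‖Av‖_q. -/

import Mathlib

/-!
Both `v` and `Av` obey the interpolation bound `‖u‖_q ≤ ‖u‖₁^{1/q} ‖u‖_∞^{1-1/q}`. Since the
entries of `A` (and of `Aᴴ`) have modulus at most `1`, `‖Av‖_∞ ≤ ‖v‖₁`, and the `k`-Hadamard
property gives `k ‖v‖_∞ ≤ ‖AᴴAv‖_∞ ≤ ‖Av‖₁`. Hence `k ‖v‖_∞ ‖Av‖_∞ ≤ ‖v‖₁ ‖Av‖₁`, and the `∞`-parts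
of the two interpolation bounds are absorbed by the `1`-parts.
-/

open Finset Matrix ENNReal

/-- The `L^p` norm on `ℂⁿ`, for `p ∈ [1,∞]` (an extended real). -/
noncomputable def lpNorm {n : ℕ} (p : ℝ≥0∞) (u : Fin n → ℂ) : ℝ :=
  if p = ∞ then ⨆ i, ‖u i‖ else (∑ i, ‖u i‖ ^ p.toReal) ^ (1 / p.toReal)

lemma ENNReal.one_div_toReal_le_one {q : ℝ≥0∞} (hq : 1 ≤ q) : 1 / q.toReal ≤ 1 := by
  rcases eq_or_ne q ∞ with rfl | hq_top
  · simp
  · exact div_le_one_of_le₀ (by simpa using ENNReal.toReal_mono hq_top hq) toReal_nonneg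

lemma Real.rpow_le_mul_rpow_sub_one {x M p : ℝ} (hx : 0 ≤ x) (hxM : x ≤ M) (hp : 1 ≤ p) :
    x ^ p ≤ x * M ^ (p - 1) := by
  calc x ^ p = x ^ (1 + (p - 1)) := by ring_nf
    _ = x * x ^ (p - 1) := by rw [Real.rpow_add' hx (by linarith), Real.rpow_one]
    _ ≤ x * M ^ (p - 1) := by gcongr

lemma Matrix.iSup_norm_mulVec_le_sum_norm {R m n : Type*} [SeminormedRing R] [Fintype n]
    {B : Matrix m n R} (hB : ∀ i j, ‖B i j‖ ≤ 1) (u : n → R) :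
    ⨆ i, ‖(B *ᵥ u) i‖ ≤ ∑ j, ‖u j‖ := by
  refine Real.iSup_le (fun i ↦ ?_) (sum_nonneg fun j _ ↦ norm_nonneg _)
  calc ‖(B *ᵥ u) i‖ = ‖∑ j, B i j * u j‖ := rfl
    _ ≤ ∑ j, ‖B i j‖ * ‖u j‖ := (norm_sum_le _ _).trans (sum_le_sum fun j _ ↦ norm_mul_le _ _)
    _ ≤ ∑ j, ‖u j‖ := sum_le_sum fun j _ ↦ mul_le_of_le_one_left (norm_nonneg _) (hB i j)

section lpNorm

variable {n : ℕ}

lemma lpNorm_nonneg (p : ℝ≥0∞) (u : Fin n → ℂ) : 0 ≤ lpNorm p u := by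
  unfold lpNorm
  split
  · exact Real.iSup_nonneg fun i ↦ norm_nonneg _
  · exact Real.rpow_nonneg (sum_nonneg fun i _ ↦ Real.rpow_nonneg (norm_nonneg _) _) _

lemma lpNorm_le_sum_norm_rpow_mul_iSup_norm_rpow {q : ℝ≥0∞} (hq : 1 ≤ q) (u : Fin n → ℂ) :
    lpNorm q u ≤ (∑ i, ‖u i‖) ^ (1 / q.toReal) * (⨆ i, ‖u i‖) ^ (1 - 1 / q.toReal) := by
  rcases eq_or_ne q ∞ with rfl | hq_top
  · simp [lpNorm]
  have hq_one : 1 ≤ q.toReal := by simpa using ENNReal.toReal_mono hq_top hq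
  have hsup : 0 ≤ ⨆ i, ‖u i‖ := Real.iSup_nonneg fun i ↦ norm_nonneg _
  have hsum_rpow : ∑ i, ‖u i‖ ^ q.toReal ≤ (∑ i, ‖u i‖) * (⨆ i, ‖u i‖) ^ (q.toReal - 1) := by
    rw [sum_mul]
    exact sum_le_sum fun i _ ↦ Real.rpow_le_mul_rpow_sub_one (norm_nonneg _)
      (le_ciSup (Finite.bddAbove_range fun j ↦ ‖u j‖) i) hq_one
  rw [lpNorm, if_neg hq_top]
  calc (∑ i, ‖u i‖ ^ q.toReal) ^ (1 / q.toReal)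
      ≤ ((∑ i, ‖u i‖) * (⨆ i, ‖u i‖) ^ (q.toReal - 1)) ^ (1 / q.toReal) := by
        gcongr
    _ = (∑ i, ‖u i‖) ^ (1 / q.toReal) * (⨆ i, ‖u i‖) ^ (1 - 1 / q.toReal) := by
        rw [Real.mul_rpow (sum_nonneg fun i _ ↦ norm_nonneg _) (Real.rpow_nonneg hsup _),
          ← Real.rpow_mul hsup]
        congr 2
        field_simp

end lpNorm

lemma Real.rpow_mul_rpow_le_of_le {P Q r e : ℝ} (hQ : 0 ≤ Q) (hQP : Q ≤ P) (he : 0 ≤ e)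
    (hre : r + e = 1) : P ^ r * Q ^ e ≤ P := by
  have hP : 0 ≤ P := hQ.trans hQP
  calc P ^ r * Q ^ e ≤ P ^ r * P ^ e := by gcongr
    _ = P := by rw [← Real.rpow_add' hP (by linarith), hre, Real.rpow_one]

theorem norm_uncertainty_general (m n : ℕ) (k : ℝ) (hk : 0 < k)
    (A : Matrix (Fin m) (Fin n) ℂ)
    (hbd : ∀ i j, ‖A i j‖ ≤ 1)
    (hHad : ∀ v : Fin n → ℂ, k * (⨆ i, ‖v i‖) ≤ ⨆ i, ‖(Aᴴ * A).mulVec v i‖)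
    (v : Fin n → ℂ) (q : ℝ≥0∞) (hq : 1 ≤ q) :
    k ^ (1 - 1 / q.toReal) * (lpNorm q v * lpNorm q (A.mulVec v)) ≤
      (∑ i, ‖v i‖) * ∑ i, ‖A.mulVec v i‖ := by
  set w := A *ᵥ v
  set r := 1 / q.toReal
  have hsup_w : ⨆ i, ‖w i‖ ≤ ∑ i, ‖v i‖ := iSup_norm_mulVec_le_sum_norm hbd v
  have hk_sup_v : k * ⨆ i, ‖v i‖ ≤ ∑ i, ‖w i‖ := by
    refine (hHad v).trans ?_
    rw [← mulVec_mulVec]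
    exact iSup_norm_mulVec_le_sum_norm (fun i j ↦ by simpa using hbd j i) w
  have hIv : 0 ≤ ⨆ i, ‖v i‖ := Real.iSup_nonneg fun i ↦ norm_nonneg _
  have hIw : 0 ≤ ⨆ i, ‖w i‖ := Real.iSup_nonneg fun i ↦ norm_nonneg _
  calc k ^ (1 - r) * (lpNorm q v * lpNorm q w)
      ≤ k ^ (1 - r) * (((∑ i, ‖v i‖) ^ r * (⨆ i, ‖v i‖) ^ (1 - r)) *
          ((∑ i, ‖w i‖) ^ r * (⨆ i, ‖w i‖) ^ (1 - r))) := by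
        gcongr ?_ * ?_
        exact mul_le_mul (lpNorm_le_sum_norm_rpow_mul_iSup_norm_rpow hq v)
          (lpNorm_le_sum_norm_rpow_mul_iSup_norm_rpow hq w) (lpNorm_nonneg _ _) (by positivity)
    _ = ((∑ i, ‖v i‖) * ∑ i, ‖w i‖) ^ r * ((k * ⨆ i, ‖v i‖) * ⨆ i, ‖w i‖) ^ (1 - r) := by
        rw [Real.mul_rpow (by positivity) (by positivity), Real.mul_rpow (by positivity) hIw,
          Real.mul_rpow hk.le hIv]
        ring
    _ ≤ (∑ i, ‖v i‖) * ∑ i, ‖w i‖ := by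
        refine Real.rpow_mul_rpow_le_of_le (by positivity) ?_
          (sub_nonneg.2 (one_div_toReal_le_one hq)) (by ring)
        rw [mul_comm (∑ i, ‖v i‖)]
        exact mul_le_mul hk_sup_v hsup_w hIw (by positivity)

/-- Norm uncertainty principle: if `A` is a `k`-Hadamard `m × n` complex matrix and
`v ≠ 0`, then for any `q ∈ [1,∞]`,
`‖v‖₁ · ‖Av‖₁ ≥ k^{1−1/q} · ‖v‖_q · ‖Av‖_q`. -/
theorem norm_uncertainty (m n : ℕ) (k : ℝ) (hk : 0 < k)
    (A : Matrix (Fin m) (Fin n) ℂ)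
    (hbd : ∀ i j, ‖A i j‖ ≤ 1)
    (hHad : ∀ v : Fin n → ℂ, k * (⨆ i, ‖v i‖) ≤ ⨆ i, ‖(Aᴴ * A).mulVec v i‖)
    (v : Fin n → ℂ) (hv : v ≠ 0) (q : ℝ≥0∞) (hq : 1 ≤ q) :
    k ^ (1 - 1 / q.toReal) * (lpNorm q v * lpNorm q (A.mulVec v)) ≤
      (∑ i, ‖v i‖) * ∑ i, ‖A.mulVec v i‖ :=
  norm_uncertainty_general m n k hk A hbd hHad v q hq
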